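/- arXiv:2408.13635 — 2 statements merged into one kernel-verified Lean document; each statement's English description precedes it below -/
import Mathlib

section
/- In the binary ISAC setting with parameters p, q, λ, α ∈ (0,1), the minimum expected Hamming distortion for estimating the legitimate state S1 from the transmitter's observations satisfies min over all functions f : {0,1}⁴ → {0,1} of E[ 1{ S1 ≠ f(X, A, Y1, Y2) } ] = (1−p) · min{λ, 1−λ}. Moreover, an optimal estimator outputs Y1 when X = 1, and when X = 0 outputs the more likely value of S1 given A (namely, the guess 1{λ < 1/2} when A = 0 and 1{λ ≥ 1/2} when A = 1). -/
open scoped BigOperators Classical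

/-- A probability mass function on a finite type, representing a finite probability space. -/
structure FinPMF (Ω : Type*) [Fintype Ω] where
  p : Ω → ℝ
  nonneg : ∀ ω, 0 ≤ p ω
  sum_one : ∑ ω, p ω = 1

namespace FinPMF

variable {Ω : Type*} [Fintype Ω] (μ : FinPMF Ω)

/-- Probability that the random variable `X` takes the value `x`. -/
def prob {α : Type*} [DecidableEq α] (X : Ω → α) (x : α) : ℝ :=
  ∑ ω, if X ω = x then μ.p ω else 0

/-- Shannon entropy `H(X)` (with the natural logarithm as the fixed base)
of a random variable with values in a finite set. -/
noncomputable def H {α : Type*} [Fintype α] [DecidableEq α] (X : Ω → α) : ℝ :=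
  ∑ x : α, -(μ.prob X x * Real.log (μ.prob X x))

/-- Conditional Shannon entropy `H(X | Y) = H(X, Y) - H(Y)`. -/
noncomputable def condH {α β : Type*} [Fintype α] [DecidableEq α] [Fintype β] [DecidableEq β]
    (X : Ω → α) (Y : Ω → β) : ℝ :=
  μ.H (fun ω => (X ω, Y ω)) - μ.H Y

/-- Mutual information `I(X ; Y) = H(X) + H(Y) - H(X, Y)`. -/
noncomputable def mutInfo {α β : Type*} [Fintype α] [DecidableEq α] [Fintype β] [DecidableEq β]
    (X : Ω → α) (Y : Ω → β) : ℝ :=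
  μ.H X + μ.H Y - μ.H (fun ω => (X ω, Y ω))

/-- The random variables `X` and `Y` are independent. -/
def Indep {α β : Type*} [DecidableEq α] [DecidableEq β] (X : Ω → α) (Y : Ω → β) : Prop :=
  ∀ x y, μ.prob (fun ω => (X ω, Y ω)) (x, y) = μ.prob X x * μ.prob Y y

/-- Markov chain `A − B − C`: the random variables `A` and `C` are conditionally
independent given `B`, expressed multiplicatively as
`P(A=a, B=b, C=c) · P(B=b) = P(A=a, B=b) · P(B=b, C=c)`. -/
def CondIndep {α β γ : Type*} [DecidableEq α] [DecidableEq β] [DecidableEq γ]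
    (A : Ω → α) (B : Ω → β) (C : Ω → γ) : Prop :=
  ∀ a b c,
    μ.prob (fun ω => (A ω, B ω, C ω)) (a, b, c) * μ.prob B b =
      μ.prob (fun ω => (A ω, B ω)) (a, b) * μ.prob (fun ω => (B ω, C ω)) (b, c)

end FinPMF

/-! ### Binary ISAC setting -/

/-- The binary convolution `a∗b = a(1−b) + (1−a)b`. -/
noncomputable def star (a b : ℝ) : ℝ := a * (1 - b) + (1 - a) * b

/-- The binary entropy function `H_b(x) = −x log x − (1−x) log (1−x)` (natural logarithm). -/
noncomputable def binEnt (x : ℝ) : ℝ := -(x * Real.log x) - (1 - x) * Real.log (1 - x)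

/-- The input/action pmf `P_XA`: `P_XA(0,0) = (1−p)(1−q)`, `P_XA(1,0) = pq`,
`P_XA(0,1) = (1−p)q`, `P_XA(1,1) = p(1−q)`. -/
def PXA (p q : ℝ) : Bool → Bool → ℝ
  | false, false => (1 - p) * (1 - q)
  | true, false => p * q
  | false, true => (1 - p) * q
  | true, true => p * (1 - q)

/-- The conditional state pmf `P_{S1 S2 | A}(s1, s2 | a)` with parameters `λ` and `α`. -/
def PS (l α : ℝ) : Bool → Bool → Bool → ℝ
  | false, false, false => l
  | false, true, false => (1 - l) * (1 - α)
  | false, false, true => 0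
  | false, true, true => (1 - l) * α
  | true, false, false => 1 - l
  | true, true, false => l * (1 - α)
  | true, false, true => 0
  | true, true, true => l * α

/-- Sample space of the binary ISAC setting: `ω = (x, a, s1, s2)`. -/
abbrev Ω4 : Type := Bool × Bool × Bool × Bool

/-- The channel input `X`. -/
def Xrv (ω : Ω4) : Bool := ω.1
/-- The action `A`. -/
def Arv (ω : Ω4) : Bool := ω.2.1
/-- The legitimate receiver's state `S1`. -/
def S1rv (ω : Ω4) : Bool := ω.2.2.1
/-- The eavesdropper's state `S2`. -/
def S2rv (ω : Ω4) : Bool := ω.2.2.2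
/-- The legitimate receiver's channel output `Y1 = S1 · X`. -/
def Y1rv (ω : Ω4) : Bool := S1rv ω && Xrv ω
/-- The eavesdropper's channel output `Y2 = S2 · X`. -/
def Y2rv (ω : Ω4) : Bool := S2rv ω && Xrv ω

/-- The joint pmf of the binary ISAC setting:
`P(x, a, s1, s2) = P_XA(x, a) · P_{S1 S2 | A}(s1, s2 | a)`. -/
def IsBinISAC (p q l α : ℝ) (μ : FinPMF Ω4) : Prop :=
  ∀ x a s1 s2, μ.p (x, a, s1, s2) = PXA p q x a * PS l α a s1 s2

/-- In the binary ISAC setting, the minimum expected Hamming distortion for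
estimating `S1` from `(X, A, Y1, Y2)` over all functions `f : {0,1}⁴ → {0,1}` equals
`(1−p) · min{λ, 1−λ}`, and it is achieved by the estimator that outputs `Y1` when `X = 1`
and, when `X = 0`, outputs `1{λ < 1/2}` if `A = 0` and `1{λ ≥ 1/2}` if `A = 1`. -/
theorem stmt_15 (p q l α : ℝ) (hp : p ∈ Set.Ioo (0 : ℝ) 1) (hq : q ∈ Set.Ioo (0 : ℝ) 1)
    (hl : l ∈ Set.Ioo (0 : ℝ) 1) (hα : α ∈ Set.Ioo (0 : ℝ) 1)
    (μ : FinPMF Ω4) (hμ : IsBinISAC p q l α μ) :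
    (∀ f : Bool → Bool → Bool → Bool → Bool,
      (1 - p) * min l (1 - l)
        ≤ ∑ ω : Ω4,
            μ.p ω * (if S1rv ω ≠ f (Xrv ω) (Arv ω) (Y1rv ω) (Y2rv ω) then (1 : ℝ) else 0))
    ∧ (∑ ω : Ω4,
          μ.p ω *
            (if S1rv ω ≠
                (fun x a y1 _ =>
                  if x then y1
                  else if a then (if (1 : ℝ) / 2 ≤ l then true else false)
                  else (if l < (1 : ℝ) / 2 then true else false) :
                  Bool → Bool → Bool → Bool → Bool)
                  (Xrv ω) (Arv ω) (Y1rv ω) (Y2rv ω) then (1 : ℝ) else 0))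
        = (1 - p) * min l (1 - l) := by
  obtain ⟨hp0, hp1⟩ := hp
  obtain ⟨hq0, hq1⟩ := hq
  obtain ⟨hl0, hl1⟩ := hl
  obtain ⟨hα0, hα1⟩ := hα
  have hite : ∀ (P : Prop) [Decidable P], (0:ℝ) ≤ if P then 1 else 0 := by
    intro P _; split <;> norm_num
  have hP : ∀ x a s1 s2, μ.p (x, a, s1, s2) = PXA p q x a * PS l α a s1 s2 := hμ
  constructor
  · intro f
    simp only [Fintype.sum_prod_type, Fintype.sum_bool, hP, PXA, PS, Xrv, Arv, S1rv, S2rv,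
      Y1rv, Y2rv, Bool.and_false, Bool.and_true]
    have e1 : (0:ℝ) ≤ p * (1 - q) * (l * α) :=
      mul_nonneg (mul_nonneg hp0.le (by linarith)) (mul_nonneg hl0.le hα0.le)
    have e2 : (0:ℝ) ≤ p * (1 - q) * (l * (1 - α)) :=
      mul_nonneg (mul_nonneg hp0.le (by linarith)) (mul_nonneg hl0.le (by linarith))
    have e3 : (0:ℝ) ≤ p * (1 - q) * (1 - l) :=
      mul_nonneg (mul_nonneg hp0.le (by linarith)) (by linarith)
    have e4 : (0:ℝ) ≤ p * q * ((1 - l) * α) :=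
      mul_nonneg (mul_nonneg hp0.le hq0.le) (mul_nonneg (by linarith) hα0.le)
    have e5 : (0:ℝ) ≤ p * q * ((1 - l) * (1 - α)) :=
      mul_nonneg (mul_nonneg hp0.le hq0.le) (mul_nonneg (by linarith) (by linarith))
    have e6 : (0:ℝ) ≤ p * q * l := mul_nonneg (mul_nonneg hp0.le hq0.le) hl0.le
    have h1 := mul_nonneg e1 (hite (¬true = f true true true true))
    have h2 := mul_nonneg e2 (hite (¬true = f true true true false))
    have h3 := mul_nonneg e3 (hite (¬false = f true true false false))
    have h4 := mul_nonneg e4 (hite (¬true = f true false true true))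
    have h5 := mul_nonneg e5 (hite (¬true = f true false true false))
    have h6 := mul_nonneg e6 (hite (¬false = f true false false false))
    cases hb1 : f false true false false <;> cases hb2 : f false false false false <;>
      simp only [ne_eq, Bool.true_eq_false, Bool.false_eq_true, not_true, not_false_iff,
        if_true, if_false, mul_one, mul_zero, zero_mul] <;>
      rcases min_cases l (1 - l) with ⟨hm, hm2⟩ | ⟨hm, hm2⟩ <;> rw [hm] <;>
      first
      | linarith [mul_nonneg (mul_nonneg (by linarith : (0:ℝ) ≤ 1 - p) hq0.le)
            (by linarith : (0:ℝ) ≤ 1 - l - l),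
          mul_nonneg (mul_nonneg (by linarith : (0:ℝ) ≤ 1 - p) (by linarith : (0:ℝ) ≤ 1 - q))
            (by linarith : (0:ℝ) ≤ 1 - l - l)]
      | linarith [mul_nonneg (mul_nonneg (by linarith : (0:ℝ) ≤ 1 - p) hq0.le)
            (by linarith : (0:ℝ) ≤ l - (1 - l)),
          mul_nonneg (mul_nonneg (by linarith : (0:ℝ) ≤ 1 - p) (by linarith : (0:ℝ) ≤ 1 - q))
            (by linarith : (0:ℝ) ≤ l - (1 - l))]
  · simp only [Fintype.sum_prod_type, Fintype.sum_bool, hP, PXA, PS, Xrv, Arv, S1rv, S2rv,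
      Y1rv, Y2rv, Bool.and_false, Bool.and_true]
    rcases le_or_gt ((1:ℝ)/2) l with h | h
    · rw [min_eq_right (by linarith)]
      norm_num [h, not_lt.mpr h]
      ring
    · rw [min_eq_left (by linarith)]
      norm_num [h, not_le.mpr h]
      ring
end

section
/- In the binary ISAC setting with parameters p, q, λ, α ∈ (0,1), the minimum expected Hamming distortion for estimating the eavesdropper's state S2 from the transmitter's observations satisfies min over all functions f : {0,1}⁴ → {0,1} of E[ 1{ S2 ≠ f(X, A, Y1, Y2) } ] = (1−p) · [ (1−q) · min{ 1−α+αλ, α−αλ } + q · min{ 1−αλ, αλ } ]. Moreover, an optimal estimator outputs Y2 when X = 1, and when X = 0 outputs the more likely value of S2 given A. -/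
open scoped BigOperators Classical

/-- In the binary ISAC setting, the minimum expected Hamming distortion for
estimating `S2` from `(X, A, Y1, Y2)` over all functions `f : {0,1}⁴ → {0,1}` equals
`(1−p)[(1−q) min{1−α+αλ, α−αλ} + q min{1−αλ, αλ}]`, and it is achieved by the estimator
that outputs `Y2` when `X = 1` and, when `X = 0`, outputs the more likely value of `S2`
given `A` (namely `1{1−α+αλ < α−αλ}` if `A = 0` and `1{1−αλ < αλ}` if `A = 1`). -/
theorem stmt_16 (p q l α : ℝ) (hp : p ∈ Set.Ioo (0 : ℝ) 1) (hq : q ∈ Set.Ioo (0 : ℝ) 1)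
    (hl : l ∈ Set.Ioo (0 : ℝ) 1) (hα : α ∈ Set.Ioo (0 : ℝ) 1)
    (μ : FinPMF Ω4) (hμ : IsBinISAC p q l α μ) :
    (∀ f : Bool → Bool → Bool → Bool → Bool,
      (1 - p) * ((1 - q) * min (1 - α + α * l) (α - α * l) + q * min (1 - α * l) (α * l))
        ≤ ∑ ω : Ω4,
            μ.p ω * (if S2rv ω ≠ f (Xrv ω) (Arv ω) (Y1rv ω) (Y2rv ω) then (1 : ℝ) else 0))
    ∧ (∑ ω : Ω4,
          μ.p ω *
            (if S2rv ω ≠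
                (fun x a _ y2 =>
                  if x then y2
                  else if a then (if 1 - α * l < α * l then true else false)
                  else (if 1 - α + α * l < α - α * l then true else false) :
                  Bool → Bool → Bool → Bool → Bool)
                  (Xrv ω) (Arv ω) (Y1rv ω) (Y2rv ω) then (1 : ℝ) else 0))
        = (1 - p) * ((1 - q) * min (1 - α + α * l) (α - α * l) + q * min (1 - α * l) (α * l)) := by
  obtain ⟨hp0, hp1⟩ := hp
  obtain ⟨hq0, hq1⟩ := hq
  obtain ⟨hl0, hl1⟩ := hl
  obtain ⟨ha0, ha1⟩ := hα
  simp only [IsBinISAC] at hμ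
  have hmin1 : min (1 - α + α * l) (α - α * l) ≤ 1 - α + α * l := min_le_left _ _
  have hmin2 : min (1 - α + α * l) (α - α * l) ≤ α - α * l := min_le_right _ _
  have hmin3 : min (1 - α * l) (α * l) ≤ 1 - α * l := min_le_left _ _
  have hmin4 : min (1 - α * l) (α * l) ≤ α * l := min_le_right _ _
  constructor
  · intro f
    have hnn : ∀ (c : Prop) [Decidable c] (w : ℝ), 0 ≤ w → 0 ≤ w * (if c then (1:ℝ) else 0) := by
      intro c _ w hw
      split <;> simp [hw]
    simp only [Fintype.sum_prod_type, Fintype.sum_bool, hμ, Xrv, Arv, S1rv, S2rv, Y1rv, Y2rv,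
      PXA, PS, Bool.and_true, Bool.and_false]
    have h1 := hnn (true ≠ f true true true true) (p * (1 - q) * (l * α)) (mul_nonneg (mul_nonneg hp0.le (by linarith)) (mul_nonneg hl0.le ha0.le))
    have h2 := hnn (false ≠ f true true true false) (p * (1 - q) * (l * (1 - α))) (mul_nonneg (mul_nonneg hp0.le (by linarith)) (mul_nonneg hl0.le (by linarith)))
    have h3 := hnn (true ≠ f true true false true) (p * (1 - q) * 0) (by simp)
    have h4 := hnn (false ≠ f true true false false) (p * (1 - q) * (1 - l)) (mul_nonneg (mul_nonneg hp0.le (by linarith)) (by linarith))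
    have h5 := hnn (true ≠ f true false true true) (p * q * ((1 - l) * α)) (mul_nonneg (mul_nonneg hp0.le hq0.le) (mul_nonneg (by linarith) ha0.le))
    have h6 := hnn (false ≠ f true false true false) (p * q * ((1 - l) * (1 - α))) (mul_nonneg (mul_nonneg hp0.le hq0.le) (mul_nonneg (by linarith) (by linarith)))
    have h7 := hnn (true ≠ f true false false true) (p * q * 0) (by simp)
    have h8 := hnn (false ≠ f true false false false) (p * q * l) (mul_nonneg (mul_nonneg hp0.le hq0.le) hl0.le)
    have hpq1 : (0:ℝ) ≤ (1 - p) * (1 - q) := mul_nonneg (by linarith) (by linarith)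
    have hpq2 : (0:ℝ) ≤ (1 - p) * q := mul_nonneg (by linarith) hq0.le
    cases hc0 : f false false false false <;> cases hc1 : f false true false false <;>
      simp only [hc0, hc1, ne_eq, Bool.true_eq_false, Bool.false_eq_true, not_true_eq_false,
        not_false_eq_true, if_true, if_false] <;>
      linarith [h1, h2, h3, h4, h5, h6, h7, h8,
        mul_le_mul_of_nonneg_left hmin1 hpq1, mul_le_mul_of_nonneg_left hmin2 hpq1,
        mul_le_mul_of_nonneg_left hmin3 hpq2, mul_le_mul_of_nonneg_left hmin4 hpq2]
  · simp only [Fintype.sum_prod_type, Fintype.sum_bool, hμ, Xrv, Arv, S1rv, S2rv, Y1rv, Y2rv,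
      PXA, PS, Bool.and_true, Bool.and_false]
    rcases lt_or_ge (1 - α + α * l) (α - α * l) with hA | hA <;>
      rcases lt_or_ge (1 - α * l) (α * l) with hB | hB
    · rw [min_eq_left hA.le, min_eq_left hB.le]
      simp [hA, hB]; ring
    · rw [min_eq_left hA.le, min_eq_right hB]
      simp [hA, not_lt.mpr hB]; ring
    · rw [min_eq_right hA, min_eq_left hB.le]
      simp [not_lt.mpr hA, hB]; ring
    · rw [min_eq_right hA, min_eq_right hB]
      simp [not_lt.mpr hA, not_lt.mpr hB]; ring
end
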